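/- Semi-dynamic half-way point invariance: for any threshold T with 0 ≤ T ≤ U_c, the bidirectional algorithm that extends forward labels while their critical-resource consumption is ≤ T and backward labels while their consumption is ≤ U_c − T, and then joins across a single arc, enumerates every resource-feasible elementary s-d path; hence the optimal value returned is independent of the choice of T. -/

import Mathlib

/-- Cost of a walk. -/
def walkCost {V : Type} (c : V → V → ℝ) (p : List V) : ℝ :=
  ((p.zip p.tail).map fun q => c q.1 q.2).sum

/-- Critical-resource consumption of a walk. -/
def critRes {V : Type} (r : V → V → ℝ) (p : List V) : ℝ :=
  ((p.zip p.tail).map fun q => r q.1 q.2).sum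

/-- A walk from `s` to `d`. -/
def IsWalk {V : Type} (A : V → V → Prop) (s d : V) (p : List V) : Prop :=
  p.Chain' A ∧ p.head? = some s ∧ p.getLast? = some d

/-- The set of `s`-`d` paths enumerated by the bidirectional join with
threshold `T`: a forward elementary prefix `q₁` (from `s` to some `i`) with
critical consumption `≤ T`, a backward elementary suffix `q₂` (from some `j`
to `d`) with critical consumption `≤ Uc − T`, joined across the arc `(i,j)`,
with disjoint node sets and total critical consumption `≤ Uc`. -/
def JoinSet {V : Type} [DecidableEq V] (A : V → V → Prop) (r : V → V → ℝ)
    (Uc : ℝ) (s d : V) (T : ℝ) : Set (List V) :=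
  {p | ∃ (i j : V) (q₁ q₂ : List V),
    IsWalk A s i q₁ ∧ q₁.Nodup ∧ IsWalk A j d q₂ ∧ q₂.Nodup ∧ A i j ∧
    q₁.toFinset ∩ q₂.toFinset = ∅ ∧
    critRes r q₁ ≤ T ∧ critRes r q₂ ≤ Uc - T ∧
    critRes r q₁ + r i j + critRes r q₂ ≤ Uc ∧
    p = q₁ ++ q₂}

/-!
Given budgets `T, T' ≥ 0` with `r(p) ≤ T + T'`, cut the path `p` at the first arc `(i, j)` at
which the running consumption exceeds `T`. The prefix `P₁` up to `i` then has `r(P₁) ≤ T`, and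
the suffix `P₂` from `j` has `r(P₂) = r(p) - r(P₁) - r(i, j) < T'`; if no arc overshoots, cut at
the last arc, leaving `P₂ = [d]` with `r(P₂) = 0 ≤ T'`. With `T' = U_c - T` this shows that the
join finds every feasible path, whatever `T ∈ [0, U_c]`.
-/

section Walks

variable {V : Type} {A : V → V → Prop} {r : V → V → ℝ}

@[simp]
lemma critRes_singleton (a : V) : critRes r [a] = 0 := by
  simp [critRes]

lemma critRes_cons_cons (a b : V) (l : List V) :
    critRes r (a :: b :: l) = r a b + critRes r (b :: l) := by
  simp [critRes]

lemma critRes_append {q₁ q₂ : List V} {i j : V} (h₁ : q₁.getLast? = some i)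
    (h₂ : q₂.head? = some j) :
    critRes r (q₁ ++ q₂) = critRes r q₁ + r i j + critRes r q₂ := by
  induction q₁ with
  | nil => simp at h₁
  | cons a t ih =>
    cases t with
    | nil =>
      obtain ⟨rfl⟩ : a = i := by simpa using h₁
      obtain ⟨u, rfl⟩ := List.head?_eq_some_iff.mp h₂
      simp [critRes_cons_cons]
    | cons b l =>
      rw [List.getLast?_cons_cons] at h₁
      rw [List.cons_append, List.cons_append, critRes_cons_cons, ← List.cons_append,
        ih h₁, critRes_cons_cons]
      ring

lemma isWalk_singleton {s d a : V} : IsWalk A s d [a] ↔ s = a ∧ d = a := by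
  change List.IsChain A [a] ∧ _ ↔ _
  simp [eq_comm]

lemma isWalk_cons_cons {s d a b : V} {l : List V} :
    IsWalk A s d (a :: b :: l) ↔ s = a ∧ A a b ∧ IsWalk A b d (b :: l) := by
  change List.IsChain A _ ∧ _ ↔ _ ∧ _ ∧ List.IsChain A _ ∧ _
  simp only [List.isChain_cons_cons, List.head?_cons, Option.some.injEq, List.getLast?_cons_cons,
    true_and, eq_comm]
  tauto

lemma IsWalk.append {s i j d : V} {q₁ q₂ : List V} (h₁ : IsWalk A s i q₁)
    (h₂ : IsWalk A j d q₂) (hij : A i j) : IsWalk A s d (q₁ ++ q₂) := by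
  obtain ⟨hc₁, hs, hi⟩ := h₁
  obtain ⟨hc₂, hj, hd⟩ := h₂
  refine ⟨hc₁.append hc₂ ?_, by simp [List.head?_append, hs], by simp [List.getLast?_append, hd]⟩
  simp [hi, hj, hij]

lemma IsWalk.ne_nil {s d : V} {p : List V} (h : IsWalk A s d p) : p ≠ [] := by
  rintro rfl
  simp [IsWalk] at h

lemma IsWalk.exists_split {d a b : V} {l : List V} (hw : IsWalk A a d (a :: b :: l))
    {T T' : ℝ} (hT : 0 ≤ T) (hT' : 0 ≤ T') (hp : critRes r (a :: b :: l) ≤ T + T') :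
    ∃ (i j : V) (q₁ q₂ : List V), a :: b :: l = q₁ ++ q₂ ∧
      IsWalk A a i q₁ ∧ IsWalk A j d q₂ ∧ A i j ∧ critRes r q₁ ≤ T ∧ critRes r q₂ ≤ T' := by
  induction l generalizing a b T with
  | nil =>
    obtain ⟨-, hab, hb⟩ := isWalk_cons_cons.mp hw
    exact ⟨a, b, [a], [b], rfl, isWalk_singleton.mpr ⟨rfl, rfl⟩, hb, hab, by simpa, by simpa⟩
  | cons c l ih =>
    obtain ⟨-, hab, hb⟩ := isWalk_cons_cons.mp hw
    rw [critRes_cons_cons] at hp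
    by_cases hrab : r a b ≤ T
    · obtain ⟨i, j, q₁, q₂, hsplit, hq₁, hq₂, hij, hr₁, hr₂⟩ :=
        ih hb (sub_nonneg.mpr hrab) (by linarith)
      obtain ⟨t, rfl⟩ := List.head?_eq_some_iff.mp hq₁.2.1
      have hr₁' : critRes r (a :: b :: t) ≤ T := by rw [critRes_cons_cons]; linarith
      exact ⟨i, j, a :: b :: t, q₂, by rw [hsplit]; rfl,
        isWalk_cons_cons.mpr ⟨rfl, hab, hq₁⟩, hq₂, hij, hr₁', hr₂⟩
    · exact ⟨a, b, [a], b :: c :: l, rfl, isWalk_singleton.mpr ⟨rfl, rfl⟩, hb, hab, by simpa,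
        by linarith⟩

end Walks

section Join

variable {V : Type} [DecidableEq V] {A : V → V → Prop} {r : V → V → ℝ} {Uc T : ℝ} {s d : V}

lemma List.toFinset_inter_eq_empty_iff {q₁ q₂ : List V} :
    q₁.toFinset ∩ q₂.toFinset = ∅ ↔ q₁.Disjoint q₂ := by
  rw [← Finset.disjoint_iff_inter_eq_empty, List.disjoint_toFinset_iff_disjoint]

lemma mem_joinSet_iff (hT : 0 ≤ T) (hTU : T ≤ Uc) (hsd : s ≠ d) (p : List V) :
    p ∈ JoinSet A r Uc s d T ↔ IsWalk A s d p ∧ p.Nodup ∧ critRes r p ≤ Uc := by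
  constructor
  · rintro ⟨i, j, q₁, q₂, hq₁, hn₁, hq₂, hn₂, hij, hdisj, -, -, hU, rfl⟩
    refine ⟨hq₁.append hq₂ hij, List.nodup_append'.mpr ⟨hn₁, hn₂, ?_⟩, ?_⟩
    · exact List.toFinset_inter_eq_empty_iff.mp hdisj
    · rwa [critRes_append hq₁.2.2 hq₂.2.1]
  · rintro ⟨hw, hnd, hU⟩
    obtain ⟨a, l, rfl⟩ := List.exists_cons_of_ne_nil hw.ne_nil
    obtain ⟨⟩ | ⟨b, l⟩ := l
    · exact absurd ((isWalk_singleton.mp hw).1.trans (isWalk_singleton.mp hw).2.symm) hsd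
    obtain ⟨rfl, -⟩ := isWalk_cons_cons.mp hw
    obtain ⟨i, j, q₁, q₂, hsplit, hq₁, hq₂, hij, hr₁, hr₂⟩ :=
      hw.exists_split hT (sub_nonneg.mpr hTU) (by linarith)
    rw [hsplit] at hnd hU
    obtain ⟨hn₁, hn₂, hdisj⟩ := List.nodup_append'.mp hnd
    exact ⟨i, j, q₁, q₂, hq₁, hn₁, hq₂, hn₂, hij, List.toFinset_inter_eq_empty_iff.mpr hdisj,
      hr₁, hr₂, by rwa [← critRes_append hq₁.2.2 hq₂.2.1], hsplit⟩

lemma joinSet_eq (hT : 0 ≤ T) (hTU : T ≤ Uc) (hsd : s ≠ d) :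
    JoinSet A r Uc s d T = {p | IsWalk A s d p ∧ p.Nodup ∧ critRes r p ≤ Uc} :=
  Set.ext (mem_joinSet_iff hT hTU hsd)

end Join

theorem stmt17_general {V : Type} [DecidableEq V]
    (A : V → V → Prop) (c : V → V → ℝ) (r : V → V → ℝ) (Uc : ℝ)
    (s d : V) (hsd : s ≠ d) :
    (∀ T, 0 ≤ T → T ≤ Uc →
      JoinSet A r Uc s d T =
        {p | IsWalk A s d p ∧ p.Nodup ∧ critRes r p ≤ Uc}) ∧
    (∀ T T', 0 ≤ T → T ≤ Uc → 0 ≤ T' → T' ≤ Uc →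
      sInf {x : EReal | ∃ p ∈ JoinSet A r Uc s d T, (walkCost c p : EReal) = x} =
      sInf {x : EReal | ∃ p ∈ JoinSet A r Uc s d T', (walkCost c p : EReal) = x}) := by
  refine ⟨fun T hT hTU => joinSet_eq hT hTU hsd, fun T T' hT hTU hT' hTU' => ?_⟩
  rw [joinSet_eq hT hTU hsd, joinSet_eq hT' hTU' hsd]

/-- Semi-dynamic half-way point invariance: for any threshold `0 ≤ T ≤ Uc`,
the bidirectional join enumerates exactly the resource-feasible elementary
`s`-`d` paths; hence the optimal value is independent of the choice of `T`. -/
theorem stmt17 {V : Type} [DecidableEq V]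
    (A : V → V → Prop) (c : V → V → ℝ) (r : V → V → ℝ) (Uc : ℝ)
    (hpos : ∀ u v, 0 < r u v) (s d : V) (hsd : s ≠ d) :
    (∀ T, 0 ≤ T → T ≤ Uc →
      JoinSet A r Uc s d T =
        {p | IsWalk A s d p ∧ p.Nodup ∧ critRes r p ≤ Uc}) ∧
    (∀ T T', 0 ≤ T → T ≤ Uc → 0 ≤ T' → T' ≤ Uc →
      sInf {x : EReal | ∃ p ∈ JoinSet A r Uc s d T, (walkCost c p : EReal) = x} =
      sInf {x : EReal | ∃ p ∈ JoinSet A r Uc s d T', (walkCost c p : EReal) = x}) :=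
  stmt17_general A c r Uc s d hsd
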